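/- (Bihari's inequality) Let y, f be non-negative functions on [0,∞), w a continuous non-decreasing function on [0,∞) with w(u) > 0 for u > 0, and α ≥ 0. If y(t) ≤ α + ∫₀ᵗ f(s) w(y(s)) ds for all t ≥ 0, then y(t) ≤ G⁻¹(G(α) + ∫₀ᵗ f(s) ds) for all t ∈ [0,T], where G(x) = ∫_{x₀}^x dt/w(t) for some x₀ > 0 and T is chosen so that G(α) + ∫₀ᵗ f(s) ds lies in the domain of G⁻¹ for all t ∈ [0,T]. -/

import Mathlib

/-!
Put `z(t) = α + β + ∫₀ᵗ f·w(y)` with `β > 0`, so that `w ∘ z > 0`, and `F(t) = ∫₀ᵗ f`. As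
`y ≤ z` and `w` is monotone, `z(t) - z(s) ≤ w(z(t)) (F(t) - F(s))` for `s ≤ t`; as `1/w` is
decreasing, `G(z(t)) - G(z(s)) ≤ (z(t) - z(s)) / w(z(s))`. Since `f` is merely integrable there is
no derivative to compare, but continuity of `w ∘ z` gives `w(z(t)) ≤ (1 + ε) w(z(s))` for `t`
slightly beyond `s`, and a continuous induction yields `G(z(t)) - G(α + β) ≤ (1 + ε) F(t)`.
Letting `ε, β → 0` gives `G(α + ∫₀ᵗ f·w(y)) ≤ G(α) + F(t)`. Finally `G` is strictly increasing on
`[0, ∞)`, being monotone with a left inverse there, so the bound can be read off through `G⁻¹`.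
-/

open MeasureTheory Set Filter Topology intervalIntegral

lemma nonneg_of_continuousWithinAt_of_pos {w : ℝ → ℝ} (hw : ContinuousWithinAt w (Ioi 0) 0)
    (hw_pos : ∀ u > (0 : ℝ), 0 < w u) {u : ℝ} (hu : 0 ≤ u) : 0 ≤ w u := by
  rcases hu.eq_or_lt with rfl | hu
  · exact ge_of_tendsto hw (eventually_nhdsWithin_of_forall fun u hu => (hw_pos u hu).le)
  · exact (hw_pos u hu).le

lemma monotoneOn_integral_of_nonneg {g : ℝ → ℝ} {a : ℝ} (hg : ∀ t ≥ a, 0 ≤ g t)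
    (hint : ∀ s t, IntervalIntegrable g volume s t) :
    MonotoneOn (fun t => ∫ s in a..t, g s) (Ici a) := by
  intro s hs t _ hst
  dsimp only
  rw [← integral_add_adjacent_intervals (hint a s) (hint s t)]
  exact le_add_of_nonneg_right <| integral_nonneg hst fun r hr => hg r (hs.trans hr.1)

section PrimitiveOneDiv

variable {w G : ℝ → ℝ} {x₀ : ℝ}

lemma intervalIntegrable_one_div_of_pos (hw_cont : ContinuousOn w (Ioi 0))
    (hw_pos : ∀ u > (0 : ℝ), 0 < w u) {a b : ℝ} (ha : 0 < a) (hb : 0 < b) :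
    IntervalIntegrable (fun u => 1 / w u) volume a b := by
  have hsub : uIcc a b ⊆ Ioi 0 := fun u hu => (lt_min ha hb).trans_le hu.1
  exact (continuousOn_const.div (hw_cont.mono hsub)
    fun u hu => (hw_pos u (hsub hu)).ne').intervalIntegrable

lemma intervalIntegrable_one_div_zero_of_intervalIntegrable (hw_cont : ContinuousOn w (Ioi 0))
    (hw_pos : ∀ u > (0 : ℝ), 0 < w u) (hx₀ : 0 < x₀)
    (hI : IntervalIntegrable (fun u => 1 / w u) volume 0 x₀) {c : ℝ} (hc : 0 ≤ c) :
    IntervalIntegrable (fun u => 1 / w u) volume 0 c := by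
  rcases hc.eq_or_lt with rfl | hc
  · exact IntervalIntegrable.refl
  · exact hI.trans (intervalIntegrable_one_div_of_pos hw_cont hw_pos hx₀ hc)

lemma sub_eq_integral_one_div (hG : ∀ x, G x = ∫ t in x₀..x, 1 / w t) (hx₀ : 0 ≤ x₀)
    (hint : ∀ c ≥ 0, IntervalIntegrable (fun u => 1 / w u) volume 0 c)
    {a b : ℝ} (ha : 0 ≤ a) (hb : 0 ≤ b) :
    G b - G a = ∫ u in a..b, 1 / w u := by
  rw [hG, hG]
  exact integral_interval_sub_left ((hint x₀ hx₀).symm.trans (hint b hb))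
    ((hint x₀ hx₀).symm.trans (hint a ha))

lemma monotoneOn_of_eq_integral_one_div (hG : ∀ x, G x = ∫ t in x₀..x, 1 / w t)
    (hx₀ : 0 ≤ x₀) (hint : ∀ c ≥ 0, IntervalIntegrable (fun u => 1 / w u) volume 0 c)
    (hw_nonneg : ∀ u ≥ 0, 0 ≤ w u) : MonotoneOn G (Ici 0) := by
  intro a ha b hb hab
  have hsub := sub_eq_integral_one_div hG hx₀ hint ha hb
  have hpos : 0 ≤ ∫ u in a..b, 1 / w u :=
    integral_nonneg hab fun u hu => one_div_nonneg.2 (hw_nonneg u (ha.trans hu.1))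
  linarith

lemma continuousOn_of_eq_integral_one_div (hG : ∀ x, G x = ∫ t in x₀..x, 1 / w t)
    (hx₀ : 0 ≤ x₀) (hint : ∀ c ≥ 0, IntervalIntegrable (fun u => 1 / w u) volume 0 c) :
    ContinuousOn G (Ici 0) := by
  intro x (hx : 0 ≤ x)
  have hc : x < x₀ + x + 1 := by linarith
  have hGx : ContinuousWithinAt G (Icc 0 (x₀ + x + 1)) x := by
    rw [funext hG]
    refine continuousWithinAt_primitive (measure_singleton x) ?_
    rw [min_eq_right hx₀, max_eq_right (by linarith)]
    exact hint _ (by linarith)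
  refine hGx.mono_of_mem_nhdsWithin ?_
  rw [← Ici_inter_Iic]
  exact inter_mem_nhdsWithin _ (Iic_mem_nhds hc)

lemma sub_le_div_of_eq_integral_one_div (hG : ∀ x, G x = ∫ t in x₀..x, 1 / w t)
    (hx₀ : 0 ≤ x₀) (hint : ∀ c ≥ 0, IntervalIntegrable (fun u => 1 / w u) volume 0 c)
    (hw_mono : MonotoneOn w (Ioi 0)) (hw_pos : ∀ u > (0 : ℝ), 0 < w u)
    {a b : ℝ} (ha : 0 < a) (hab : a ≤ b) :
    G b - G a ≤ (b - a) / w a := by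
  rw [sub_eq_integral_one_div hG hx₀ hint ha.le (ha.le.trans hab)]
  calc ∫ u in a..b, 1 / w u
      ≤ ∫ _ in a..b, 1 / w a := by
        refine integral_mono_on hab ?_ intervalIntegrable_const fun u hu =>
          one_div_le_one_div_of_le (hw_pos a ha) (hw_mono ha (ha.trans_le hu.1) hu.1)
        exact (hint a ha.le).symm.trans (hint b (ha.le.trans hab))
    _ = (b - a) / w a := by rw [intervalIntegral.integral_const, smul_eq_mul, mul_one_div]

end PrimitiveOneDiv

section Comparison

variable {w G z F : ℝ → ℝ} {a b : ℝ}

lemma sub_le_one_add_mul_of_sub_le_mul (hw_cont : ContinuousOn w (Ioi 0))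
    (hw_pos : ∀ u > (0 : ℝ), 0 < w u) (hG_cont : ContinuousOn G (Ioi 0))
    (hG_sub : ∀ u v, 0 < u → u ≤ v → G v - G u ≤ (v - u) / w u)
    (hz_cont : ContinuousOn z (Icc a b)) (hz_pos : ∀ t ∈ Icc a b, 0 < z t)
    (hz_mono : MonotoneOn z (Icc a b))
    (hF_cont : ContinuousOn F (Icc a b)) (hF_mono : MonotoneOn F (Icc a b))
    (hzF : ∀ s ∈ Icc a b, ∀ t ∈ Icc a b, s ≤ t → z t - z s ≤ w (z t) * (F t - F s))
    {ε : ℝ} (hε : 0 < ε) :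
    ∀ t ∈ Icc a b, G (z t) - G (z a) ≤ (1 + ε) * (F t - F a) := by
  set S := {t | G (z t) - G (z a) ≤ (1 + ε) * (F t - F a)}
  have hS : IsClosed (S ∩ Icc a b) := by
    rw [inter_comm]
    exact isClosed_Icc.isClosed_le ((hG_cont.comp hz_cont hz_pos).sub continuousOn_const)
      (continuousOn_const.mul (hF_cont.sub continuousOn_const))
  refine hS.Icc_subset_of_forall_mem_nhdsWithin (by simp [S]) ?_
  rintro τ ⟨hτS, hτ⟩
  have hτ' : τ ∈ Icc a b := Ico_subset_Icc_self hτ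
  have hwτ : 0 < w (z τ) := hw_pos _ (hz_pos τ hτ')
  have hnear : ∀ᶠ t in 𝓝[>] τ, w (z t) < (1 + ε) * w (z τ) :=
    nhdsWithin_le_of_mem (Icc_mem_nhdsGT_of_mem hτ) <|
      ((hw_cont.comp hz_cont hz_pos) τ hτ').eventually_lt_const
        (lt_mul_of_one_lt_left hwτ (by linarith))
  filter_upwards [hnear, Ioc_mem_nhdsGT hτ.2] with t hwt ht
  have ht' : t ∈ Icc a b := ⟨hτ.1.trans ht.1.le, ht.2⟩
  have hFτt : 0 ≤ F t - F τ := sub_nonneg.2 (hF_mono hτ' ht' ht.1.le)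
  have hstep : G (z t) - G (z τ) ≤ (1 + ε) * (F t - F τ) :=
    calc G (z t) - G (z τ) ≤ (z t - z τ) / w (z τ) :=
          hG_sub _ _ (hz_pos τ hτ') (hz_mono hτ' ht' ht.1.le)
      _ ≤ w (z t) * (F t - F τ) / w (z τ) := by gcongr; exact hzF τ hτ' t ht' ht.1.le
      _ ≤ (1 + ε) * w (z τ) * (F t - F τ) / w (z τ) := by gcongr
      _ = (1 + ε) * (F t - F τ) := by field_simp
  simp only [S, mem_ofPred_eq] at hτS ⊢
  linarith

lemma sub_le_of_sub_le_mul (hw_cont : ContinuousOn w (Ioi 0))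
    (hw_pos : ∀ u > (0 : ℝ), 0 < w u) (hG_cont : ContinuousOn G (Ioi 0))
    (hG_sub : ∀ u v, 0 < u → u ≤ v → G v - G u ≤ (v - u) / w u)
    (hz_cont : ContinuousOn z (Icc a b)) (hz_pos : ∀ t ∈ Icc a b, 0 < z t)
    (hz_mono : MonotoneOn z (Icc a b))
    (hF_cont : ContinuousOn F (Icc a b)) (hF_mono : MonotoneOn F (Icc a b))
    (hzF : ∀ s ∈ Icc a b, ∀ t ∈ Icc a b, s ≤ t → z t - z s ≤ w (z t) * (F t - F s))
    {t : ℝ} (ht : t ∈ Icc a b) :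
    G (z t) - G (z a) ≤ F t - F a := by
  have hlim : Tendsto (fun ε => (1 + ε) * (F t - F a)) (𝓝[>] 0) (𝓝 (F t - F a)) := by
    refine (((continuous_const_add 1).mul continuous_const).tendsto' 0 _ ?_).mono_left
      nhdsWithin_le_nhds
    simp
  exact ge_of_tendsto hlim <| eventually_nhdsWithin_of_forall fun ε hε =>
    sub_le_one_add_mul_of_sub_le_mul hw_cont hw_pos hG_cont hG_sub hz_cont hz_pos hz_mono
      hF_cont hF_mono hzF hε t ht

end Comparison

namespace Bihari

variable {y f w G : ℝ → ℝ} {α : ℝ}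

lemma shifted_sub_le_integral (hy0 : ∀ t ≥ (0 : ℝ), 0 ≤ y t) (hf0 : ∀ t ≥ (0 : ℝ), 0 ≤ f t)
    (hw_cont : ContinuousOn w (Ioi 0)) (hw_mono : MonotoneOn w (Ici 0))
    (hw_pos : ∀ u > (0 : ℝ), 0 < w u) (hw_nonneg : ∀ u ≥ (0 : ℝ), 0 ≤ w u)
    (hG_cont : ContinuousOn G (Ioi 0))
    (hG_sub : ∀ u v, 0 < u → u ≤ v → G v - G u ≤ (v - u) / w u)
    (hg_int : ∀ a b, IntervalIntegrable (fun s => f s * w (y s)) volume a b)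
    (hf_int : ∀ a b, IntervalIntegrable f volume a b)
    (hmain : ∀ t ≥ (0 : ℝ), y t ≤ α + ∫ s in (0 : ℝ)..t, f s * w (y s))
    (hα : 0 ≤ α) {β t : ℝ} (hβ : 0 < β) (ht : 0 ≤ t) :
    G (α + β + ∫ s in (0 : ℝ)..t, f s * w (y s)) - G (α + β) ≤ ∫ s in (0 : ℝ)..t, f s := by
  set z := fun t => α + β + ∫ s in (0 : ℝ)..t, f s * w (y s) with hz
  have hz_mono : MonotoneOn z (Ici 0) := fun s hs r hr hsr =>
    add_le_add_right (monotoneOn_integral_of_nonneg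
      (fun s hs => mul_nonneg (hf0 s hs) (hw_nonneg _ (hy0 s hs))) hg_int hs hr hsr) _
  have hz_pos : ∀ s ≥ 0, 0 < z s := fun s hs =>
    calc 0 < z 0 := by simp only [z, integral_same, add_zero]; linarith
      _ ≤ z s := hz_mono self_mem_Ici hs hs
  have hzF : ∀ s ∈ Icc 0 t, ∀ r ∈ Icc 0 t, s ≤ r →
      z r - z s ≤ w (z r) * ((∫ u in (0 : ℝ)..r, f u) - ∫ u in (0 : ℝ)..s, f u) := by
    intro s hs r hr hsr
    rw [hz, add_sub_add_left_eq_sub, integral_interval_sub_left (hg_int 0 r) (hg_int 0 s),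
      integral_interval_sub_left (hf_int 0 r) (hf_int 0 s), ← intervalIntegral.integral_const_mul]
    refine integral_mono_on hsr (hg_int s r) ((hf_int s r).const_mul _) fun u hu => ?_
    have hu0 : 0 ≤ u := hs.1.trans hu.1
    have hyz : y u ≤ z r :=
      calc y u ≤ α + ∫ s in (0 : ℝ)..u, f s * w (y s) := hmain u hu0
        _ ≤ z u := by simp only [z]; linarith
        _ ≤ z r := hz_mono hu0 hr.1 hu.2
    exact (mul_le_mul_of_nonneg_left (hw_mono (hy0 u hu0) (hz_pos r hr.1).le hyz)
      (hf0 u hu0)).trans_eq (mul_comm _ _)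
  have h := sub_le_of_sub_le_mul hw_cont hw_pos hG_cont hG_sub
    (continuous_const.add (continuous_primitive hg_int 0)).continuousOn
    (fun s hs => hz_pos s hs.1) (hz_mono.mono Icc_subset_Ici_self)
    (continuous_primitive hf_int 0).continuousOn
    ((monotoneOn_integral_of_nonneg hf0 hf_int).mono Icc_subset_Ici_self) hzF ⟨ht, le_rfl⟩
  simpa [z] using h

lemma le_add_integral (hy0 : ∀ t ≥ (0 : ℝ), 0 ≤ y t)
    (hf0 : ∀ t ≥ (0 : ℝ), 0 ≤ f t) (hw_cont : ContinuousOn w (Ioi 0))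
    (hw_mono : MonotoneOn w (Ici 0)) (hw_pos : ∀ u > (0 : ℝ), 0 < w u)
    (hw_nonneg : ∀ u ≥ (0 : ℝ), 0 ≤ w u) (hG_cont : ContinuousOn G (Ici 0))
    (hG_mono : MonotoneOn G (Ici 0))
    (hG_sub : ∀ u v, 0 < u → u ≤ v → G v - G u ≤ (v - u) / w u)
    (hg_int : ∀ a b, IntervalIntegrable (fun s => f s * w (y s)) volume a b)
    (hf_int : ∀ a b, IntervalIntegrable f volume a b)
    (hmain : ∀ t ≥ (0 : ℝ), y t ≤ α + ∫ s in (0 : ℝ)..t, f s * w (y s))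
    (hα : 0 ≤ α) {t : ℝ} (ht : 0 ≤ t) :
    G (α + ∫ s in (0 : ℝ)..t, f s * w (y s)) ≤ G α + ∫ s in (0 : ℝ)..t, f s := by
  have hshift : Tendsto (fun β => α + β) (𝓝[>] 0) (𝓝[Ici 0] α) :=
    tendsto_nhdsWithin_of_tendsto_nhds_of_eventually_within _
      ((continuous_const_add α).tendsto' 0 α (add_zero α) |>.mono_left nhdsWithin_le_nhds)
      (eventually_nhdsWithin_of_forall fun β (hβ : 0 < β) => by simp only [mem_Ici]; linarith)
  refine ge_of_tendsto (((hG_cont α hα).tendsto.comp hshift).add_const _)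
    (eventually_nhdsWithin_of_forall fun β (hβ : 0 < β) => ?_)
  have hz : 0 ≤ α + ∫ s in (0 : ℝ)..t, f s * w (y s) := (hy0 t ht).trans (hmain t ht)
  have h := shifted_sub_le_integral hy0 hf0 hw_cont hw_mono hw_pos hw_nonneg
    (hG_cont.mono Ioi_subset_Ici_self) hG_sub hg_int hf_int hmain hα hβ ht
  have hβz : G (α + ∫ s in (0 : ℝ)..t, f s * w (y s))
      ≤ G (α + β + ∫ s in (0 : ℝ)..t, f s * w (y s)) :=
    hG_mono hz (by simp only [mem_Ici]; linarith) (by linarith)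
  simp only [Function.comp_apply]
  linarith

end Bihari

theorem bihari_inequality_general
    (y f w : ℝ → ℝ) (α x₀ T : ℝ)
    (hy0 : ∀ t ≥ (0 : ℝ), 0 ≤ y t) (hf0 : ∀ t ≥ (0 : ℝ), 0 ≤ f t)
    (hw_cont : ContinuousOn w (Set.Ici 0)) (hw_mono : MonotoneOn w (Set.Ici 0))
    (hw_pos : ∀ u > (0 : ℝ), 0 < w u)
    (hα : 0 ≤ α) (hx₀ : 0 < x₀)
    (hyint : ∀ t, IntervalIntegrable (fun s => f s * w (y s)) MeasureTheory.volume 0 t)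
    (hfint : ∀ t, IntervalIntegrable f MeasureTheory.volume 0 t)
    (G Ginv : ℝ → ℝ)
    (hG : ∀ x, G x = ∫ t in x₀..x, 1 / w t)
    (hGinv : ∀ x ≥ (0 : ℝ), Ginv (G x) = x)
    (hmain : ∀ t ≥ (0 : ℝ), y t ≤ α + ∫ s in (0 : ℝ)..t, f s * w (y s))
    (hdom : ∀ t ∈ Set.Icc (0 : ℝ) T, ∃ x ≥ (0 : ℝ), G x = G α + ∫ s in (0 : ℝ)..t, f s) :
    ∀ t ∈ Set.Icc (0 : ℝ) T, y t ≤ Ginv (G α + ∫ s in (0 : ℝ)..t, f s) := by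
  have hG_inj : InjOn G (Ici 0) := fun a ha b hb h => by rw [← hGinv a ha, ← hGinv b hb, h]
  have hw_cont' : ContinuousOn w (Ioi 0) := hw_cont.mono Ioi_subset_Ici_self
  have hI : IntervalIntegrable (fun u => 1 / w u) volume 0 x₀ := by
    -- otherwise the junk value of the integral makes `G 0 = 0 = G x₀`
    by_contra hI
    refine hx₀.ne (hG_inj self_mem_Ici hx₀.le ?_)
    rw [hG, hG, integral_symm, integral_undef hI, integral_same, neg_zero]
  have hint : ∀ c ≥ 0, IntervalIntegrable (fun u => 1 / w u) volume 0 c := fun _ =>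
    intervalIntegrable_one_div_zero_of_intervalIntegrable hw_cont' hw_pos hx₀ hI
  have hw_nonneg : ∀ u ≥ (0 : ℝ), 0 ≤ w u := fun u =>
    nonneg_of_continuousWithinAt_of_pos ((hw_cont 0 self_mem_Ici).mono Ioi_subset_Ici_self) hw_pos
  have hG_mono := monotoneOn_of_eq_integral_one_div hG hx₀.le hint hw_nonneg
  intro t ht
  obtain ⟨x, hx, hGx⟩ := hdom t ht
  have hle := Bihari.le_add_integral hy0 hf0 hw_cont' hw_mono hw_pos hw_nonneg
    (continuousOn_of_eq_integral_one_div hG hx₀.le hint) hG_mono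
    (fun u v hu huv => sub_le_div_of_eq_integral_one_div hG hx₀.le hint
      (hw_mono.mono Ioi_subset_Ici_self) hw_pos hu huv)
    (fun a b => (hyint a).symm.trans (hyint b)) (fun a b => (hfint a).symm.trans (hfint b))
    hmain hα ht.1
  have hz : 0 ≤ α + ∫ s in (0 : ℝ)..t, f s * w (y s) := (hy0 t ht.1).trans (hmain t ht.1)
  calc y t ≤ α + ∫ s in (0 : ℝ)..t, f s * w (y s) := hmain t ht.1
    _ ≤ x := ((hG_mono.strictMonoOn_of_injOn hG_inj).le_iff_le hz hx).1 (hGx ▸ hle)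
    _ = Ginv (G α + ∫ s in (0 : ℝ)..t, f s) := by rw [← hGx, hGinv x hx]

/-- Bihari's inequality: if `y(t) ≤ α + ∫₀ᵗ f(s) w(y(s)) ds`, then
`y(t) ≤ G⁻¹(G(α) + ∫₀ᵗ f(s) ds)` on `[0,T]`, where `G(x) = ∫_{x₀}^x dt/w(t)`. -/
theorem bihari_inequality
    (y f w : ℝ → ℝ) (α x₀ T : ℝ)
    (hy0 : ∀ t ≥ (0 : ℝ), 0 ≤ y t) (hf0 : ∀ t ≥ (0 : ℝ), 0 ≤ f t)
    (hw_cont : ContinuousOn w (Set.Ici 0)) (hw_mono : MonotoneOn w (Set.Ici 0))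
    (hw_pos : ∀ u > (0 : ℝ), 0 < w u)
    (hα : 0 ≤ α) (hx₀ : 0 < x₀) (hT : 0 ≤ T)
    (hyint : ∀ t, IntervalIntegrable (fun s => f s * w (y s)) MeasureTheory.volume 0 t)
    (hfint : ∀ t, IntervalIntegrable f MeasureTheory.volume 0 t)
    (G Ginv : ℝ → ℝ)
    (hG : ∀ x, G x = ∫ t in x₀..x, 1 / w t)
    (hGinv : ∀ x ≥ (0 : ℝ), Ginv (G x) = x)
    (hmain : ∀ t ≥ (0 : ℝ), y t ≤ α + ∫ s in (0 : ℝ)..t, f s * w (y s))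
    (hdom : ∀ t ∈ Set.Icc (0 : ℝ) T, ∃ x ≥ (0 : ℝ), G x = G α + ∫ s in (0 : ℝ)..t, f s) :
    ∀ t ∈ Set.Icc (0 : ℝ) T, y t ≤ Ginv (G α + ∫ s in (0 : ℝ)..t, f s) :=
  bihari_inequality_general y f w α x₀ T hy0 hf0 hw_cont hw_mono hw_pos hα hx₀ hyint hfint G Ginv hG
    hGinv hmain hdom
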